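/- arXiv:1112.4911 — 4 statements merged into one kernel-verified Lean document; each statement's English description precedes it below -/
import Mathlib

section
/- For every real x > 0, the sum over n ≥ 1 of λ(n)/(e^{nπx} − 1) equals the sum over k ≥ 1 of e^{−k²πx}. -/
/-!
With `q = e^{-πx}` the left side is the Lambert series `∑ λ(n) qⁿ / (1 - qⁿ)`. Expanding each
term as a geometric series and collecting the terms `q^N` turns it into
`∑_N (∑_{d ∣ N} λ(d)) q^N`. The divisor sum `∑_{d ∣ N} λ(d)` is multiplicative and equals
`1 - 1 + ⋯ ± 1 = [k even]` at `N = pᵏ`, so it is the indicator function of the squares, and only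
the terms `q^{k²}` survive.
-/

open Real

/-- The Liouville function `λ(n) = (-1)^Ω(n)`. -/
def liouville (n : ℕ) : ℤ := (-1) ^ n.primeFactorsList.length

theorem Nat.isSquare_iff_forall_even_factorization {n : ℕ} (hn : n ≠ 0) :
    IsSquare n ↔ ∀ p, Even (n.factorization p) := by
  constructor
  · rintro ⟨r, rfl⟩ p
    have hr : r ≠ 0 := by rintro rfl; simp at hn
    rw [Nat.factorization_mul hr hr, Finsupp.add_apply]
    exact ⟨_, rfl⟩
  · intro h
    refine ⟨n.factorization.prod fun p e => p ^ (e / 2), ?_⟩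
    conv_lhs => rw [← Nat.prod_factorization_pow_eq_self hn]
    rw [Finsupp.prod, Finsupp.prod, ← Finset.prod_mul_distrib]
    refine Finset.prod_congr rfl fun p _ => ?_
    rw [← pow_add, ← two_mul, Nat.mul_div_cancel' (even_iff_two_dvd.mp (h p))]

open ArithmeticFunction ArithmeticFunction.zeta in
theorem ArithmeticFunction.sum_divisors_liouville {n : ℕ} (hn : n ≠ 0) :
    ∑ d ∈ n.divisors, ArithmeticFunction.liouville d = if IsSquare n then 1 else 0 := by
  have hmul : (ζ * ArithmeticFunction.liouville : ArithmeticFunction ℤ).IsMultiplicative :=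
    isMultiplicative_zeta.natCast.mul isMultiplicative_liouville
  have hprime_pow {p k : ℕ} (hp : p.Prime) :
      (ζ * ArithmeticFunction.liouville : ArithmeticFunction ℤ) (p ^ k) =
        if Even k then 1 else 0 := by
    rw [coe_zeta_mul_apply, Nat.sum_divisors_prime_pow hp]
    simp only [liouville_apply (pow_ne_zero _ hp.ne_zero), cardFactors_apply_prime_pow hp]
    rw [neg_one_geom_sum]
    simp only [Nat.even_add_one, ite_not]
  rw [← coe_zeta_mul_apply, IsMultiplicative.multiplicative_factorization _ hmul hn, Finsupp.prod,
    Finset.prod_congr rfl fun p hp => hprime_pow (Nat.prime_of_mem_primeFactors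
      (Nat.support_factorization n ▸ hp)), Finset.prod_boole]
  refine if_congr ?_ rfl rfl
  rw [Nat.isSquare_iff_forall_even_factorization hn]
  refine ⟨fun h p => ?_, fun h p _ => h p⟩
  by_cases hp : p ∈ n.factorization.support
  · exact h p hp
  · simp [Finsupp.notMem_support_iff.mp hp]

theorem liouville_eq_arithmeticFunction_liouville {n : ℕ} (hn : n ≠ 0) :
    liouville n = ArithmeticFunction.liouville n := by
  rw [ArithmeticFunction.liouville_apply hn, ArithmeticFunction.cardFactors_apply, liouville]

theorem sum_divisors_liouville {n : ℕ} (hn : n ≠ 0) :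
    ∑ d ∈ n.divisors, liouville d = if IsSquare n then 1 else 0 := by
  rw [← ArithmeticFunction.sum_divisors_liouville hn]
  exact Finset.sum_congr rfl fun d hd =>
    liouville_eq_arithmeticFunction_liouville (Nat.pos_of_mem_divisors hd).ne'

theorem abs_liouville (n : ℕ) : |(liouville n : ℝ)| = 1 := by
  simp [liouville]

theorem tsum_pnat_pow_of_norm_lt_one {K : Type*} [NormedDivisionRing K] {r : K} (hr : ‖r‖ < 1) :
    ∑' n : ℕ+, r ^ (n : ℕ) = r * (1 - r)⁻¹ := by
  rw [tsum_pnat_eq_tsum_succ (f := (r ^ ·))]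
  simp_rw [pow_succ']
  rw [tsum_mul_left, tsum_geometric_of_norm_lt_one hr]

theorem tsum_pnat_ite_isSquare {α : Type*} [AddCommMonoid α] [TopologicalSpace α]
    (g : ℕ+ → α) :
    ∑' n : ℕ+, (if IsSquare (n : ℕ) then g n else 0) = ∑' k : ℕ+, g (k ^ 2) := by
  have hinj : Function.Injective fun k : ℕ+ => k ^ 2 := fun a b hab => by
    simpa using congrArg (fun n : ℕ+ => Nat.sqrt n) hab
  rw [← hinj.tsum_eq]
  · simp [IsSquare.sq]
  · intro n hn
    obtain ⟨r, hr⟩ : IsSquare (n : ℕ) := by by_contra h; simp [h] at hn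
    have hr0 : 0 < r := Nat.pos_of_mul_pos_left (hr ▸ n.pos)
    refine ⟨⟨r, hr0⟩, PNat.eq ?_⟩
    show ((⟨r, hr0⟩ : ℕ+) : ℕ) ^ 2 = n
    rw [hr, sq]

section Lambert

variable {𝕜 : Type*} [NontriviallyNormedField 𝕜] [CompleteSpace 𝕜]

theorem tsum_mul_pow_div_one_sub_eq_tsum_sum_divisors {f : ℕ → 𝕜} {C : ℝ} (hf : ∀ n, ‖f n‖ ≤ C)
    {r : 𝕜} (hr : ‖r‖ < 1) :
    ∑' n : ℕ+, f n * r ^ (n : ℕ) / (1 - r ^ (n : ℕ)) =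
      ∑' n : ℕ+, (∑ d ∈ (n : ℕ).divisors, f d) * r ^ (n : ℕ) := by
  set G : ℕ+ × ℕ+ → 𝕜 := fun c => f c.1 * r ^ (c.1 * c.2 : ℕ)
  have hG : Summable G := by
    refine ((summable_prod_mul_pow 0 (r := ‖r‖) (by simpa)).mul_left C).of_norm_bounded
      fun c => ?_
    simp only [G, norm_mul, norm_pow, pow_zero, one_mul]
    exact mul_le_mul_of_nonneg_right (hf _) (by positivity)
  have hrows (n : ℕ+) : ∑' m : ℕ+, G (n, m) = f n * r ^ (n : ℕ) / (1 - r ^ (n : ℕ)) := by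
    have hrn : ‖r ^ (n : ℕ)‖ < 1 := by
      simpa [norm_pow] using pow_lt_one₀ (norm_nonneg r) hr n.ne_zero
    simp only [G, pow_mul, tsum_mul_left, tsum_pnat_pow_of_norm_lt_one hrn, div_eq_mul_inv,
      mul_assoc]
  have hfibres (n : ℕ+) :
      ∑' x : (n : ℕ).divisorsAntidiagonal, G (sigmaAntidiagonalEquivProd ⟨n, x⟩) =
        (∑ d ∈ (n : ℕ).divisors, f d) * r ^ (n : ℕ) := by
    rw [tsum_fintype, Finset.univ_eq_attach]
    simp only [sigmaAntidiagonalEquivProd, divisorsAntidiagonalFactors, PNat.mk_coe,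
      Equiv.coe_fn_mk, G]
    rw [Finset.sum_attach _ fun x : ℕ × ℕ => f x.1 * r ^ (x.1 * x.2), Finset.sum_mul,
      ← Nat.sum_divisorsAntidiagonal fun a _ => f a * r ^ (n : ℕ)]
    exact Finset.sum_congr rfl fun x hx => by rw [(Nat.mem_divisorsAntidiagonal.mp hx).1]
  calc _ = ∑' n : ℕ+, ∑' m : ℕ+, G (n, m) := tsum_congr fun n => (hrows n).symm
    _ = ∑' c, G c := hG.tsum_prod.symm
    _ = ∑' s, G (sigmaAntidiagonalEquivProd s) := (sigmaAntidiagonalEquivProd.tsum_eq G).symm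
    _ = ∑' n : ℕ+, ∑' x : (n : ℕ).divisorsAntidiagonal,
          G (sigmaAntidiagonalEquivProd ⟨n, x⟩) :=
      (sigmaAntidiagonalEquivProd.summable_iff.mpr hG).tsum_sigma
    _ = _ := tsum_congr hfibres

end Lambert

theorem liouville_theta_sum (x : ℝ) (hx : 0 < x) :
    ∑' n : ℕ, (liouville (n + 1) : ℝ) / (Real.exp (((n : ℝ) + 1) * π * x) - 1) =
      ∑' k : ℕ, Real.exp (-((k : ℝ) + 1) ^ 2 * π * x) := by
  set q := Real.exp (-(π * x))
  have hq : ‖q‖ < 1 := by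
    rw [Real.norm_of_nonneg (Real.exp_nonneg _), Real.exp_lt_one_iff]
    linarith [mul_pos pi_pos hx]
  have hexp (n : ℕ) : Real.exp (-(n * (π * x))) = q ^ n := by
    rw [← Real.exp_nat_mul, neg_mul_eq_mul_neg]
  have hterm (n : ℕ) : (liouville (n + 1) : ℝ) / (Real.exp (((n : ℝ) + 1) * π * x) - 1) =
      (liouville (n + 1) : ℝ) * q ^ (n + 1) / (1 - q ^ (n + 1)) := by
    rw [← hexp, Real.exp_neg]
    push_cast
    field_simp
  calc _ = ∑' n : ℕ+, (liouville n : ℝ) * q ^ (n : ℕ) / (1 - q ^ (n : ℕ)) := by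
        rw [tsum_pnat_eq_tsum_succ (f := fun n => (liouville n : ℝ) * q ^ n / (1 - q ^ n))]
        exact tsum_congr hterm
    _ = ∑' n : ℕ+, (∑ d ∈ (n : ℕ).divisors, (liouville d : ℝ)) * q ^ (n : ℕ) :=
        tsum_mul_pow_div_one_sub_eq_tsum_sum_divisors (fun n => (abs_liouville n).le) hq
    _ = ∑' n : ℕ+, if IsSquare (n : ℕ) then q ^ (n : ℕ) else 0 := by
        refine tsum_congr fun n => ?_
        rw [← Int.cast_sum, sum_divisors_liouville n.ne_zero]
        split_ifs <;> simp
    _ = ∑' k : ℕ+, q ^ ((k : ℕ) ^ 2) := by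
        simpa using tsum_pnat_ite_isSquare fun n => q ^ (n : ℕ)
    _ = _ := by
        rw [tsum_pnat_eq_tsum_succ (f := fun k => q ^ (k ^ 2))]
        refine tsum_congr fun k => ?_
        rw [← hexp]
        push_cast
        ring_nf
end

section
/- For complex x with |x| < 1, the Lambert series Σ_{n≥1} μ(n)·x^n/(1−x^n) equals x. -/
/-!
Expanding `x ^ n / (1 - x ^ n) = ∑_{c ≥ 1} x ^ (n * c)` turns a Lambert series
`∑ a n x ^ n / (1 - x ^ n)` into the double series `∑_{d, c} a d x ^ (d * c)`, which converges
absolutely for bounded `a`. Regrouping it by `m = d * c` gives the power series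
`∑ (a * ζ) m x ^ m` of a Dirichlet convolution, and for `a = μ` Möbius inversion `μ * ζ = 1`
leaves only the term `x`.
-/

open scoped ArithmeticFunction.zeta

namespace ArithmeticFunction

variable {𝕜 : Type*} [NormedField 𝕜]

lemma norm_natCoe_zeta_le_one (n : ℕ) : ‖(ζ : ArithmeticFunction 𝕜) n‖ ≤ 1 := by
  rw [natCoe_apply, zeta_apply]
  split_ifs <;> simp

variable {x : 𝕜}

lemma hasSum_zeta_mul_pow_mul {n : ℕ} (hn : n ≠ 0) (hx : ‖x‖ < 1) :
    HasSum (fun c => (ζ : ArithmeticFunction 𝕜) c * x ^ (n * c)) (x ^ n / (1 - x ^ n)) := by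
  have hxn : ‖x ^ n‖ < 1 := by rw [norm_pow]; exact pow_lt_one₀ (norm_nonneg x) hx hn
  have h := (hasSum_nat_add_iff (f := fun c => (ζ : ArithmeticFunction 𝕜) c * x ^ (n * c)) 1).mp
    (by simpa [mul_add, pow_add, pow_mul, div_eq_mul_inv, mul_comm] using
      (hasSum_geometric_of_norm_lt_one hxn).mul_left (x ^ n))
  simpa [div_eq_mul_inv] using h

variable [CompleteSpace 𝕜]

-- For `d, c ≥ 1` we have `(d - 1) + (c - 1) ≤ d * c`, so the family is dominated by a product
-- of two geometric series.
lemma summable_mul_mul_pow_mul {a b : ArithmeticFunction 𝕜} {A B : ℝ}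
    (ha : ∀ n, ‖a n‖ ≤ A) (hb : ∀ n, ‖b n‖ ≤ B) (hx : ‖x‖ < 1) :
    Summable fun p : ℕ × ℕ => a p.1 * b p.2 * x ^ (p.1 * p.2) := by
  have hgeom : Summable fun n : ℕ => ‖x‖ ^ (n - 1) :=
    (summable_nat_add_iff 1).mp (by simpa using summable_geometric_of_lt_one (norm_nonneg x) hx)
  have hA : 0 ≤ A := (norm_nonneg _).trans (ha 0)
  have hB : 0 ≤ B := (norm_nonneg _).trans (hb 0)
  refine Summable.of_norm_bounded ((hgeom.mul_left A).mul_of_nonneg (hgeom.mul_left B)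
    (fun _ => by positivity) (fun _ => by positivity)) ?_
  rintro ⟨_ | d, _ | c⟩
  case zero.zero | zero.succ | succ.zero =>
    simp only [map_zero, zero_mul, mul_zero, norm_zero]
    positivity
  rw [norm_mul, norm_mul, norm_pow, mul_mul_mul_comm, ← pow_add]
  refine mul_le_mul (mul_le_mul (ha _) (hb _) (norm_nonneg _) hA)
    (pow_le_pow_of_le_one (norm_nonneg x) hx.le ?_) (by positivity) (by positivity)
  simp only [Nat.add_sub_cancel]
  nlinarith

lemma tsum_mul_mul_pow_mul {a b : ArithmeticFunction 𝕜} {A B : ℝ}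
    (ha : ∀ n, ‖a n‖ ≤ A) (hb : ∀ n, ‖b n‖ ≤ B) (hx : ‖x‖ < 1) :
    ∑' p : ℕ × ℕ, a p.1 * b p.2 * x ^ (p.1 * p.2) = ∑' m, (a * b) m * x ^ m := by
  refine (((summable_mul_mul_pow_mul ha hb hx).hasSum.tsum_fiberwise
    fun p => p.1 * p.2).tsum_eq).symm.trans (tsum_congr fun m => ?_)
  rcases eq_or_ne m 0 with rfl | hm
  · have (p : (fun p : ℕ × ℕ => p.1 * p.2) ⁻¹' {0}) :
        a p.1.1 * b p.1.2 * x ^ (p.1.1 * p.1.2) = 0 := by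
      obtain ⟨⟨d, c⟩, hp⟩ := p
      rcases Nat.mul_eq_zero.mp hp with rfl | rfl <;> simp
    simp [this]
  rw [show (fun p : ℕ × ℕ => p.1 * p.2) ⁻¹' {m} = m.divisorsAntidiagonal by ext; simp [hm],
    Finset.tsum_subtype' m.divisorsAntidiagonal fun p => a p.1 * b p.2 * x ^ (p.1 * p.2),
    mul_apply, Finset.sum_mul]
  exact Finset.sum_congr rfl fun p hp => by rw [(Nat.mem_divisorsAntidiagonal.mp hp).1]

theorem hasSum_mul_pow_div_one_sub_pow {a : ArithmeticFunction 𝕜} {A : ℝ}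
    (ha : ∀ n, ‖a n‖ ≤ A) (hx : ‖x‖ < 1) :
    HasSum (fun n => a n * x ^ n / (1 - x ^ n)) (∑' m, (a * ζ) m * x ^ m) := by
  rw [← tsum_mul_mul_pow_mul ha norm_natCoe_zeta_le_one hx]
  refine (summable_mul_mul_pow_mul ha norm_natCoe_zeta_le_one hx).hasSum.prod_fiberwise
    fun n => ?_
  rcases eq_or_ne n 0 with rfl | hn
  · simp
  · simpa only [mul_assoc, mul_div_assoc] using (hasSum_zeta_mul_pow_mul hn hx).mul_left (a n)

end ArithmeticFunction

open ArithmeticFunction in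
theorem moebius_lambert (x : ℂ) (hx : ‖x‖ < 1) :
    ∑' n : ℕ, (ArithmeticFunction.moebius n : ℂ) * x ^ n / (1 - x ^ n) = x := by
  have hμ (n : ℕ) : ‖(moebius : ArithmeticFunction ℂ) n‖ ≤ 1 := by
    rw [intCoe_apply, Complex.norm_intCast]
    exact_mod_cast abs_moebius_le_one
  simpa [coe_moebius_mul_coe_zeta, one_apply] using
    (hasSum_mul_pow_div_one_sub_pow hμ hx).tsum_eq
end

section
/- For complex x with |x| < 1, Σ_{n≥1} μ(n)·x^n/(x^n + 1) = x − 2x². -/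
/-!
Expanding each term as a geometric series,
`∑ a n * x ^ n / (1 - x ^ n) = ∑_{n, k ≥ 1} a n * x ^ (n * k)`; for bounded `a` this double
series converges absolutely, and grouping it by `m = n * k` gives `∑ (a * ζ) m * x ^ m`, which
is `x` for `a = μ` because `μ * ζ = 1`. The theorem follows by applying this at `x` and `x ^ 2`
via `y / (y + 1) = y / (1 - y) - 2 * y ^ 2 / (1 - y ^ 2)`.
-/

open ArithmeticFunction
open scoped ArithmeticFunction.zeta ArithmeticFunction.Moebius

section

variable {𝕜 : Type*} [NormedField 𝕜]

lemma hasSum_zeta_mul_geometric {y : 𝕜} (hy : ‖y‖ < 1) :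
    HasSum (fun k ↦ (ζ : ArithmeticFunction 𝕜) k * y ^ k) (y / (1 - y)) := by
  rw [← hasSum_nat_add_iff' 1]
  simpa [natCoe_apply, pow_succ', div_eq_mul_inv] using
    (hasSum_geometric_of_norm_lt_one hy).mul_left y

lemma hasSum_mul_pow_of_hasSum_prod [CompleteSpace 𝕜] {a b : ArithmeticFunction 𝕜} {x s : 𝕜}
    (h : HasSum (fun p : ℕ × ℕ ↦ a p.1 * b p.2 * x ^ (p.1 * p.2)) s) :
    HasSum (fun m ↦ (a * b) m * x ^ m) s := by
  refine (h.tsum_fiberwise fun p ↦ p.1 * p.2).congr_fun fun m ↦ ?_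
  rcases eq_or_ne m 0 with rfl | hm
  · have : ∀ p : (fun p : ℕ × ℕ ↦ p.1 * p.2) ⁻¹' {0},
        a p.1.1 * b p.1.2 * x ^ (p.1.1 * p.1.2) = 0 := by
      rintro ⟨⟨n, k⟩, hp⟩
      rcases Nat.mul_eq_zero.mp hp with rfl | rfl <;> simp
    simp [this]
  · rw [show (fun p : ℕ × ℕ ↦ p.1 * p.2) ⁻¹' {m} = m.divisorsAntidiagonal by ext; simp [hm],
      Finset.tsum_subtype' m.divisorsAntidiagonal fun p ↦ a p.1 * b p.2 * x ^ (p.1 * p.2),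
      mul_apply, Finset.sum_mul]
    refine Finset.sum_congr rfl fun p hp ↦ ?_
    rw [(Nat.mem_divisorsAntidiagonal.mp hp).1]

lemma summable_prod_mul_mul_pow [CompleteSpace 𝕜] {a b : ArithmeticFunction 𝕜} {C D : ℝ}
    (ha : ∀ n, ‖a n‖ ≤ C) (hb : ∀ n, ‖b n‖ ≤ D) {x : 𝕜} (hx : ‖x‖ < 1) :
    Summable (fun p : ℕ × ℕ ↦ a p.1 * b p.2 * x ^ (p.1 * p.2)) := by
  refine Summable.of_norm ?_
  have hg : (fun p : ℕ+ × ℕ+ ↦ ((p.1 : ℕ), (p.2 : ℕ))).Injective := fun p q h ↦ by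
    simp only [Prod.mk.injEq, PNat.coe_inj] at h
    exact Prod.ext h.1 h.2
  rw [← hg.summable_iff fun p hp ↦ ?_]
  · refine Summable.of_nonneg_of_le (fun _ ↦ norm_nonneg _) (fun p ↦ ?_)
      ((summable_prod_mul_pow 0 (r := ‖x‖) (by simpa using hx)).mul_left (C * D))
    simp only [Function.comp_apply, norm_mul, norm_pow, pow_zero, one_mul]
    have hC : 0 ≤ C := (norm_nonneg _).trans (ha 0)
    gcongr
    exacts [ha _, hb _]
  · obtain ⟨n, k⟩ := p
    have : n = 0 ∨ k = 0 := by
      by_contra! h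
      exact hp ⟨(⟨n, Nat.pos_of_ne_zero h.1⟩, ⟨k, Nat.pos_of_ne_zero h.2⟩), rfl⟩
    rcases this with rfl | rfl <;> simp

theorem hasSum_lambert [CompleteSpace 𝕜] {a : ArithmeticFunction 𝕜} {C : ℝ}
    (ha : ∀ n, ‖a n‖ ≤ C) {x s : 𝕜} (hx : ‖x‖ < 1)
    (hs : HasSum (fun m ↦ (a * ζ) m * x ^ m) s) :
    HasSum (fun n ↦ a n * x ^ n / (1 - x ^ n)) s := by
  have hζ : ∀ n, ‖(ζ : ArithmeticFunction 𝕜) n‖ ≤ 1 := fun n ↦ by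
    rcases eq_or_ne n 0 with rfl | hn <;> simp [*]
  have h := (summable_prod_mul_mul_pow ha hζ hx).hasSum
  rw [hs.unique (hasSum_mul_pow_of_hasSum_prod h)]
  refine h.prod_fiberwise fun n ↦ ?_
  rcases eq_or_ne n 0 with rfl | hn
  · simp
  have hxn : ‖x ^ n‖ < 1 := by rw [norm_pow]; exact pow_lt_one₀ (norm_nonneg x) hx hn
  simpa only [pow_mul, mul_assoc, mul_div_assoc] using
    (hasSum_zeta_mul_geometric hxn).mul_left (a n)

theorem hasSum_moebius_lambert [CompleteSpace 𝕜] {x : 𝕜} (hx : ‖x‖ < 1) :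
    HasSum (fun n ↦ (μ n : 𝕜) * x ^ n / (1 - x ^ n)) x := by
  have hμ : ∀ n, ‖(μ : ArithmeticFunction 𝕜) n‖ ≤ 1 := fun n ↦ by
    rcases moebius_eq_or n with h | h | h <;> simp [h]
  simpa using hasSum_lambert hμ hx <| by
    convert hasSum_ite_eq 1 x with m
    rw [coe_moebius_mul_coe_zeta, one_apply]
    split_ifs <;> simp_all

end

lemma mul_div_add_one_eq_sub {K : Type*} [Field K] (c : K) {y : K} (h₁ : y ≠ 1) (h₂ : y ≠ -1) :
    c * y / (y + 1) = c * y / (1 - y) - 2 * (c * y ^ 2 / (1 - y ^ 2)) := by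
  have h₁' : 1 - y ≠ 0 := sub_ne_zero.mpr h₁.symm
  have h₂' : y + 1 ≠ 0 := fun h ↦ h₂ (eq_neg_of_add_eq_zero_left h)
  have h₃ : 1 - y ^ 2 ≠ 0 := by
    rw [show 1 - y ^ 2 = (1 - y) * (y + 1) by ring]; exact mul_ne_zero h₁' h₂'
  field_simp
  ring

theorem moebius_plus_one (x : ℂ) (hx : ‖x‖ < 1) :
    ∑' n : ℕ, (ArithmeticFunction.moebius n : ℂ) * x ^ n / (x ^ n + 1) = x - 2 * x ^ 2 := by
  have hx2 : ‖x ^ 2‖ < 1 := by rw [norm_pow]; exact pow_lt_one₀ (norm_nonneg x) hx two_ne_zero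
  refine (((hasSum_moebius_lambert hx).sub
    ((hasSum_moebius_lambert hx2).mul_left 2)).congr_fun fun n ↦ ?_).tsum_eq
  rcases eq_or_ne n 0 with rfl | hn
  · simp
  have hxn : ‖x ^ n‖ < 1 := by rw [norm_pow]; exact pow_lt_one₀ (norm_nonneg x) hx hn
  rw [← pow_right_comm, mul_div_add_one_eq_sub _ (fun h ↦ by simp [h] at hxn)
    (fun h ↦ by simp [h] at hxn)]
end

section
/- Σ_{n≥1} μ(n)/(2^n + 1) = 0. -/
/-!
Expanding `x ^ d / (1 - x ^ d)` as a geometric series and regrouping the absolutely convergent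
double series by `n = d * k` turns the Lambert series `∑ μ(d) x ^ d / (1 - x ^ d)` into
`∑ (μ * ζ)(n) x ^ n = x`. Since `y / (1 + y) = y / (1 - y) - 2 y ^ 2 / (1 - y ^ 2)`, this gives
`∑ μ(n) x ^ n / (1 + x ^ n) = x - 2 x ^ 2`, which vanishes at `x = 1 / 2`.
-/

open ArithmeticFunction Function
open scoped ArithmeticFunction.zeta ArithmeticFunction.Moebius

section NormLtOne

variable {𝕜 : Type*} [NormedField 𝕜] {x : 𝕜}

theorem norm_pow_lt_one (hx : ‖x‖ < 1) {n : ℕ} (hn : n ≠ 0) : ‖x ^ n‖ < 1 := by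
  rw [norm_pow]
  exact pow_lt_one₀ (norm_nonneg x) hx hn

theorem one_sub_ne_zero_of_norm_lt_one (hx : ‖x‖ < 1) : 1 - x ≠ 0 :=
  sub_ne_zero.mpr fun h ↦ by simp [← h] at hx

theorem one_add_ne_zero_of_norm_lt_one (hx : ‖x‖ < 1) : 1 + x ≠ 0 :=
  fun h ↦ by simp [eq_neg_of_add_eq_zero_right h] at hx

theorem hasSum_ite_zero_mul_pow_mul (c : 𝕜) (hx : ‖x‖ < 1) {n : ℕ} (hn : n ≠ 0) :
    HasSum (fun k ↦ if k = 0 then 0 else c * x ^ (n * k)) (c * x ^ n / (1 - x ^ n)) := by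
  have hxn := norm_pow_lt_one hx hn
  have hne := one_sub_ne_zero_of_norm_lt_one hxn
  have hterm : (fun k ↦ if k = 0 then 0 else c * x ^ (n * k)) =
      update (fun k ↦ c * (x ^ n) ^ k) 0 0 := by
    ext k
    rcases eq_or_ne k 0 with rfl | hk <;> simp [pow_mul, *]
  have hval : c * x ^ n / (1 - x ^ n) = 0 - c * (x ^ n) ^ 0 + c * (1 - x ^ n)⁻¹ := by
    field_simp
    ring
  rw [hterm, hval]
  exact ((hasSum_geometric_of_norm_lt_one hxn).mul_left c).update 0 0

end NormLtOne

namespace ArithmeticFunction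

variable {𝕜 : Type*} [NormedField 𝕜]

/-- The column `k = 0` is zeroed out so that, for `n ≠ 0`, the fibre of `(d, k) ↦ d * k`
over `n` is exactly `n.divisorsAntidiagonal`. -/
def lambertFamily (f : ArithmeticFunction 𝕜) (x : 𝕜) (p : ℕ × ℕ) : 𝕜 :=
  if p.2 = 0 then 0 else f p.1 * x ^ (p.1 * p.2)

variable (f : ArithmeticFunction 𝕜) {x : 𝕜}

theorem hasSum_lambertFamily_row (hx : ‖x‖ < 1) (d : ℕ) :
    HasSum (fun k ↦ lambertFamily f x (d, k)) (f d * x ^ d / (1 - x ^ d)) := by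
  rcases eq_or_ne d 0 with rfl | hd
  · simp [lambertFamily, hasSum_zero]
  · exact hasSum_ite_zero_mul_pow_mul (f d) hx hd

theorem summable_norm_lambertFamily (hx : ‖x‖ < 1) (hf : Summable fun n ↦ ‖f n * x ^ n‖) :
    Summable fun p ↦ ‖lambertFamily f x p‖ := by
  have hrow (d : ℕ) : HasSum (fun k ↦ ‖lambertFamily f x (d, k)‖)
      (‖f d‖ * ‖x‖ ^ d / (1 - ‖x‖ ^ d)) := by
    rcases eq_or_ne d 0 with rfl | hd
    · simp [lambertFamily, hasSum_zero]
    · simp only [lambertFamily, apply_ite norm, norm_zero, norm_mul, norm_pow]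
      exact hasSum_ite_zero_mul_pow_mul ‖f d‖ (by rwa [norm_norm]) hd
  refine (summable_prod_of_nonneg fun _ ↦ norm_nonneg _).mpr ⟨fun d ↦ (hrow d).summable, ?_⟩
  refine (hf.div_const (1 - ‖x‖)).of_nonneg_of_le (fun _ ↦ tsum_nonneg fun _ ↦ norm_nonneg _)
    fun d ↦ ?_
  rw [(hrow d).tsum_eq, norm_mul, norm_pow]
  rcases eq_or_ne d 0 with rfl | hd
  · simp
  · have : ‖x‖ ^ d ≤ ‖x‖ := pow_le_of_le_one (norm_nonneg x) hx.le hd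
    gcongr

theorem hasSum_lambertFamily [CompleteSpace 𝕜] (hx : ‖x‖ < 1)
    (hf : Summable fun n ↦ ‖f n * x ^ n‖) :
    HasSum (lambertFamily f x) (∑' n, (f * ζ) n * x ^ n) := by
  have hsum := (summable_norm_lambertFamily f hx hf).of_norm
  have hfib := hsum.hasSum.tsum_fiberwise fun p ↦ p.1 * p.2
  suffices ∑' p, lambertFamily f x p = ∑' n, (f * ζ) n * x ^ n from this ▸ hsum.hasSum
  rw [← hfib.tsum_eq]
  refine tsum_congr fun n ↦ ?_
  rcases eq_or_ne n 0 with rfl | hn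
  · have (p : (fun p : ℕ × ℕ ↦ p.1 * p.2) ⁻¹' {0}) : lambertFamily f x p = 0 := by
      obtain ⟨⟨d, k⟩, hp⟩ := p
      rcases mul_eq_zero.mp hp with rfl | rfl <;> simp [lambertFamily]
    simp [this]
  · rw [show (fun p : ℕ × ℕ ↦ p.1 * p.2) ⁻¹' {n} = n.divisorsAntidiagonal by ext; simp [hn],
      Finset.tsum_subtype' n.divisorsAntidiagonal (lambertFamily f x), coe_mul_zeta_apply,
      Finset.sum_mul, ← Nat.sum_divisorsAntidiagonal (fun d _ ↦ f d * x ^ n)]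
    refine Finset.sum_congr rfl fun p hp ↦ ?_
    obtain ⟨hpn, -⟩ := Nat.mem_divisorsAntidiagonal.mp hp
    simp [lambertFamily, Nat.ne_zero_of_mem_divisorsAntidiagonal hp, hpn]

theorem hasSum_mul_pow_div_one_sub [CompleteSpace 𝕜] (hx : ‖x‖ < 1)
    (hf : Summable fun n ↦ ‖f n * x ^ n‖) :
    HasSum (fun n ↦ f n * x ^ n / (1 - x ^ n)) (∑' n, (f * ζ) n * x ^ n) :=
  (hasSum_lambertFamily f hx hf).prod_fiberwise (hasSum_lambertFamily_row f hx)

theorem norm_intCast_moebius_le_one (n : ℕ) : ‖(μ n : 𝕜)‖ ≤ 1 := by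
  rcases moebius_eq_or n with h | h | h <;> simp [h]

theorem hasSum_moebius_mul_pow_div_one_sub [CompleteSpace 𝕜] (hx : ‖x‖ < 1) :
    HasSum (fun n ↦ (μ n : 𝕜) * x ^ n / (1 - x ^ n)) x := by
  have hμ : Summable fun n ↦ ‖(μ : ArithmeticFunction 𝕜) n * x ^ n‖ := by
    refine (summable_geometric_of_lt_one (norm_nonneg x) hx).of_nonneg_of_le
      (fun _ ↦ norm_nonneg _) fun n ↦ ?_
    rw [norm_mul, norm_pow, intCoe_apply]
    exact mul_le_of_le_one_left (by positivity) (norm_intCast_moebius_le_one n)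
  simpa [coe_moebius_mul_coe_zeta, one_apply] using hasSum_mul_pow_div_one_sub _ hx hμ

theorem hasSum_moebius_mul_pow_div_one_add [CompleteSpace 𝕜] (hx : ‖x‖ < 1) :
    HasSum (fun n ↦ (μ n : 𝕜) * x ^ n / (1 + x ^ n)) (x - 2 * x ^ 2) := by
  refine ((hasSum_moebius_mul_pow_div_one_sub hx).sub
    ((hasSum_moebius_mul_pow_div_one_sub (norm_pow_lt_one hx two_ne_zero)).mul_left 2)).congr_fun
    fun n ↦ ?_
  rcases eq_or_ne n 0 with rfl | hn
  · simp
  have hxn := norm_pow_lt_one hx hn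
  have hsub := one_sub_ne_zero_of_norm_lt_one hxn
  have hadd := one_add_ne_zero_of_norm_lt_one hxn
  have hsq := one_sub_ne_zero_of_norm_lt_one (norm_pow_lt_one hxn two_ne_zero)
  rw [← pow_right_comm]
  field_simp
  ring

end ArithmeticFunction

theorem moebius_two_sum :
    ∑' n : ℕ, (ArithmeticFunction.moebius n : ℝ) / (2 ^ n + 1) = 0 := by
  have h := hasSum_moebius_mul_pow_div_one_add (x := (2⁻¹ : ℝ)) (by norm_num)
  rw [show (2⁻¹ : ℝ) - 2 * 2⁻¹ ^ 2 = 0 by norm_num] at h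
  refine (h.congr_fun fun n ↦ ?_).tsum_eq
  rw [inv_pow]
  field_simp
end
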